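/- arXiv:1608.00622 — 2 statements merged into one kernel-verified Lean document; each statement's English description precedes it below -/
import Mathlib

section
/- With $T$ as in the policy-iteration setting ($T(v)_i = \min_{a\in U_i}\{c_i(a)+\gamma\sum_j e_{ij}(a)v_j\}$, $U_i$ finite, $E(a)$ row-stochastic, $\gamma\in(0,1)$), define modified policy iteration: given $v_k$ with $T(v_k)\le v_k$, choose a minimizing policy $a^{(k)}$ for $v_k$ and set $v_{k+1} = L_{a^{(k)}}^{N}(v_k)$, where $L_a(v) = c(a)+\gamma E(a)v$ and $N\ge1$ is fixed. Then the sequence $(v_k)$ is monotone nonincreasing and converges to the unique fixed point $v^*$ of $T$; moreover for all $k$, $T^k(v_0) \ge v_k \ge v^*$. -/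
/-!
If `T w ≤ w`, a minimizing policy `p` for `w` satisfies `L_p w = T w ≤ w`, so by monotonicity of
`L_p` the iterates `L_p^[m] w` decrease; hence `v' = L_p^[N] w` satisfies `v' ≤ T w ≤ w` and
`T v' ≤ L_p v' ≤ v'`. Thus the super-solution property propagates, `v_{k+1} ≤ T v_k`, and by
monotonicity of `T` the sequence is dominated by value iteration. Since `T` is a `γ`-contraction
in the sup norm, `T^[k] w → v*` for every `w`; for a super-solution these iterates decrease, so
`v* ≤ w`, and `v_k` is squeezed between `v*` and `T^[k] v_0 → v*`.
-/

open Filter Topology Function Finset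

section ModifiedPolicyIteration

variable {α : Type*} [Preorder α]

theorem Monotone.iterate_le_map_of_map_le {L : α → α} (hL : Monotone L) {w : α} (hw : L w ≤ w)
    {N : ℕ} (hN : 1 ≤ N) : L^[N] w ≤ L w :=
  hL.antitone_iterate_of_map_le hw hN

theorem Monotone.map_iterate_le_iterate_of_map_le {L : α → α} (hL : Monotone L) {w : α}
    (hw : L w ≤ w) (N : ℕ) : L (L^[N] w) ≤ L^[N] w := by
  rw [← iterate_succ_apply' L N w]
  exact hL.antitone_iterate_of_map_le hw N.le_succ

theorem Monotone.le_of_map_le_of_tendsto_iterate [TopologicalSpace α] [OrderClosedTopology α]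
    {T : α → α} (hT : Monotone T) {w vstar : α} (hw : T w ≤ w)
    (hlim : Tendsto (fun k ↦ T^[k] w) atTop (𝓝 vstar)) : vstar ≤ w :=
  le_of_tendsto' hlim fun k ↦ hT.antitone_iterate_of_map_le hw (Nat.zero_le k)

theorem Monotone.modifiedPolicyIteration_step {T L : α → α} (hL : Monotone L)
    (hTL : ∀ x, T x ≤ L x) {N : ℕ} (hN : 1 ≤ N) {w : α} (hopt : L w = T w) (hw : T w ≤ w) :
    T (L^[N] w) ≤ L^[N] w ∧ L^[N] w ≤ T w := by
  rw [← hopt] at hw ⊢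
  exact ⟨(hTL _).trans (hL.map_iterate_le_iterate_of_map_le hw N),
    hL.iterate_le_map_of_map_le hw hN⟩

variable {T : α → α} {L : ℕ → α → α} {N : ℕ} {v : ℕ → α}

theorem modifiedPolicyIteration_map_le_and_succ_le_map (hL : ∀ k, Monotone (L k))
    (hTL : ∀ k x, T x ≤ L k x) (hN : 1 ≤ N) (hopt : ∀ k, L k (v k) = T (v k))
    (hstep : ∀ k, v (k + 1) = (L k)^[N] (v k)) (h0 : T (v 0) ≤ v 0) (k : ℕ) :
    T (v k) ≤ v k ∧ v (k + 1) ≤ T (v k) := by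
  have hstep' k (hk : T (v k) ≤ v k) : T (v (k + 1)) ≤ v (k + 1) ∧ v (k + 1) ≤ T (v k) :=
    hstep k ▸ (hL k).modifiedPolicyIteration_step (hTL k) hN (hopt k) hk
  induction k with
  | zero => exact ⟨h0, (hstep' 0 h0).2⟩
  | succ k ih => exact ⟨(hstep' k ih.1).1, (hstep' (k + 1) (hstep' k ih.1).1).2⟩

theorem modifiedPolicyIteration_convergence [TopologicalSpace α] [OrderClosedTopology α]
    (hT : Monotone T) {vstar : α} [TendstoIxxClass Set.Icc (𝓝 vstar) (𝓝 vstar)]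
    (hlim : ∀ w, Tendsto (fun k ↦ T^[k] w) atTop (𝓝 vstar))
    (hL : ∀ k, Monotone (L k)) (hTL : ∀ k x, T x ≤ L k x) (hN : 1 ≤ N)
    (hopt : ∀ k, L k (v k) = T (v k)) (hstep : ∀ k, v (k + 1) = (L k)^[N] (v k))
    (h0 : T (v 0) ≤ v 0) :
    (∀ k, v (k + 1) ≤ v k) ∧ Tendsto v atTop (𝓝 vstar) ∧
      ∀ k, vstar ≤ v k ∧ v k ≤ T^[k] (v 0) := by
  have hmpi := modifiedPolicyIteration_map_le_and_succ_le_map hL hTL hN hopt hstep h0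
  have hlower k : vstar ≤ v k := hT.le_of_map_le_of_tendsto_iterate (hmpi k).1 (hlim (v k))
  have hupper k : v k ≤ T^[k] (v 0) :=
    hT.seq_le_seq (x := v) (y := fun j ↦ T^[j] (v 0)) k le_rfl (fun j _ ↦ (hmpi j).2)
      fun j _ ↦ (iterate_succ_apply' T j _).ge
  refine ⟨fun k ↦ (hmpi k).2.trans (hmpi k).1, ?_, fun k ↦ ⟨hlower k, hupper k⟩⟩
  exact (tendsto_const_nhds.Icc (hlim (v 0))).of_smallSets
    (Eventually.of_forall fun k ↦ ⟨hlower k, hupper k⟩)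

end ModifiedPolicyIteration

namespace MDP

variable {ι : Type*} [Fintype ι] {U : ι → Type*} (c : ∀ i, U i → ℝ) (e : ∀ i, U i → ι → ℝ)
  (γ : ℝ)

def qValue (w : ι → ℝ) (i : ι) (a : U i) : ℝ := c i a + γ * ∑ j, e i a j * w j

/-- `policyOp c e γ p` is the paper's `L_p` and `bellman c e γ` its `T`. -/
def policyOp (p : ∀ i, U i) (w : ι → ℝ) : ι → ℝ := fun i ↦ qValue c e γ w i (p i)

noncomputable def bellman (w : ι → ℝ) : ι → ℝ := fun i ↦ ⨅ a, qValue c e γ w i a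

variable {c e γ}

theorem monotone_qValue (he0 : ∀ i a j, 0 ≤ e i a j) (hγ : 0 ≤ γ) (i : ι) (a : U i) :
    Monotone fun w ↦ qValue c e γ w i a := fun w w' hww' ↦ by
  simp only [qValue]
  gcongr with j
  exacts [he0 i a j, hww' j]

theorem qValue_le_add_dist (he0 : ∀ i a j, 0 ≤ e i a j) (he1 : ∀ i a, ∑ j, e i a j = 1)
    (hγ : 0 ≤ γ) (w w' : ι → ℝ) (i : ι) (a : U i) :
    qValue c e γ w i a ≤ qValue c e γ w' i a + γ * dist w w' := by
  have hsum : ∑ j, e i a j * w j ≤ ∑ j, e i a j * w' j + dist w w' :=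
    calc ∑ j, e i a j * w j ≤ ∑ j, e i a j * (w' j + dist w w') := by
          gcongr with j
          · exact he0 i a j
          · linarith [le_abs_self (w j - w' j), Real.dist_eq (w j) (w' j), dist_le_pi_dist w w' j]
      _ = ∑ j, e i a j * w' j + dist w w' := by
          simp only [mul_add, sum_add_distrib, ← sum_mul, he1, one_mul]
  unfold qValue
  linarith [mul_le_mul_of_nonneg_left hsum hγ]

theorem monotone_policyOp (he0 : ∀ i a j, 0 ≤ e i a j) (hγ : 0 ≤ γ) (p : ∀ i, U i) :
    Monotone (policyOp c e γ p) := fun _ _ hww' i ↦ monotone_qValue he0 hγ i (p i) hww'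

variable [∀ i, Finite (U i)]

theorem bellman_le_policyOp (p : ∀ i, U i) (w : ι → ℝ) : bellman c e γ w ≤ policyOp c e γ p w :=
  fun i ↦ ciInf_le (Set.finite_range _).bddBelow (p i)

theorem monotone_bellman (he0 : ∀ i a j, 0 ≤ e i a j) (hγ : 0 ≤ γ) :
    Monotone (bellman c e γ) := fun _ _ hww' i ↦
  ciInf_mono (Set.finite_range _).bddBelow fun a ↦ monotone_qValue he0 hγ i a hww'

theorem bellman_le_add_dist [∀ i, Nonempty (U i)] (he0 : ∀ i a j, 0 ≤ e i a j)
    (he1 : ∀ i a, ∑ j, e i a j = 1) (hγ : 0 ≤ γ) (w w' : ι → ℝ) (i : ι) :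
    bellman c e γ w i ≤ bellman c e γ w' i + γ * dist w w' := by
  obtain ⟨a, ha⟩ := exists_eq_ciInf_of_finite (f := qValue c e γ w' i)
  calc bellman c e γ w i ≤ qValue c e γ w i a := ciInf_le (Set.finite_range _).bddBelow a
    _ ≤ qValue c e γ w' i a + γ * dist w w' := qValue_le_add_dist he0 he1 hγ w w' i a
    _ = bellman c e γ w' i + γ * dist w w' := by rw [ha, bellman]

theorem contractingWith_bellman [∀ i, Nonempty (U i)] (he0 : ∀ i a j, 0 ≤ e i a j)
    (he1 : ∀ i a, ∑ j, e i a j = 1) (hγ0 : 0 ≤ γ) (hγ1 : γ < 1) :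
    ContractingWith γ.toNNReal (bellman c e γ) := by
  refine ⟨Real.toNNReal_lt_one.2 hγ1, LipschitzWith.of_dist_le_mul fun w w' ↦ ?_⟩
  rw [Real.coe_toNNReal γ hγ0]
  refine (dist_pi_le_iff (by positivity)).2 fun i ↦ ?_
  rw [Real.dist_eq, abs_sub_le_iff]
  constructor
  · linarith [bellman_le_add_dist (c := c) he0 he1 hγ0 w w' i]
  · linarith [dist_comm w' w ▸ bellman_le_add_dist (c := c) he0 he1 hγ0 w' w i]

end MDP

/-- Modified policy iteration: starting from a super-solution `v₀`, the MPI
sequence is monotone nonincreasing, converges to the unique fixed point `v*`,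
and is squeezed between value iteration and `v*`. -/
theorem stmt4 {n : ℕ} (U : Fin n → Type*)
    [∀ i, Fintype (U i)] [∀ i, Nonempty (U i)]
    (γ : ℝ) (hγ0 : 0 < γ) (hγ1 : γ < 1)
    (c : ∀ i, U i → ℝ) (e : ∀ i, U i → Fin n → ℝ)
    (he0 : ∀ i a j, 0 ≤ e i a j) (he1 : ∀ i a, ∑ j, e i a j = 1)
    (T : (Fin n → ℝ) → Fin n → ℝ)
    (hT : ∀ v i, T v i = ⨅ a : U i, (c i a + γ * ∑ j, e i a j * v j))
    (L : (∀ i, U i) → (Fin n → ℝ) → Fin n → ℝ)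
    (hL : ∀ p w i, L p w i = c i (p i) + γ * ∑ j, e i (p i) j * w j)
    (N : ℕ) (hN : 1 ≤ N)
    (v : ℕ → Fin n → ℝ) (a : ℕ → ∀ i, U i)
    (hopt : ∀ k, L (a k) (v k) = T (v k))
    (hstep : ∀ k, v (k+1) = (L (a k))^[N] (v k))
    (h0 : T (v 0) ≤ v 0)
    (vstar : Fin n → ℝ) (hfix : T vstar = vstar) :
    (∀ k, v (k+1) ≤ v k) ∧
    Filter.Tendsto v Filter.atTop (nhds vstar) ∧
    (∀ k, vstar ≤ v k ∧ v k ≤ T^[k] (v 0)) := by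
  have hT' : T = MDP.bellman c e γ := funext fun w ↦ funext (hT w)
  have hL' : L = MDP.policyOp c e γ := funext fun p ↦ funext fun w ↦ funext (hL p w)
  subst hT' hL'
  have hcontr := MDP.contractingWith_bellman (c := c) he0 he1 hγ0.le hγ1
  have hlim w : Tendsto (fun k ↦ (MDP.bellman c e γ)^[k] w) atTop (𝓝 vstar) :=
    hcontr.fixedPoint_unique hfix ▸ hcontr.tendsto_iterate_fixedPoint w
  exact modifiedPolicyIteration_convergence (MDP.monotone_bellman he0 hγ0.le) hlim
    (fun k ↦ MDP.monotone_policyOp he0 hγ0.le (a k))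
    (fun k ↦ MDP.bellman_le_policyOp (a k)) hN hopt hstep h0
end

section
/- Let $v^*$ solve the fixed point equation $v = \min_{(\alpha,s)}\{[D(s) + \gamma E(\alpha,s)]v - c(\alpha,s)\}$ componentwise, where the minimum is over a finite set of policies, $\gamma\in(0,1)$, and for each policy the matrix $D(s) + \gamma E(\alpha,s)$ is (entrywise) nonnegative with row sums at most $\max(1,\gamma) = 1$, and at each row either $D(s)$ contributes a single entry equal to 1 and $E$ contributes zero, or $D(s)$ contributes zero and $E(\alpha,s)$ has row sum 1. Assume additionally that for the rows where $D(s)$ is active (pure switching), the cost $-c$ satisfies $-c_i \ge \Delta_0 > 0$ (strictly positive switching cost), and that under any policy the number of consecutive pure-switching rows reachable before hitting a $\gamma$-discounted row is bounded by $m-1$. Then the fixed point $v^*$ is unique. -/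
/-!
Compare two fixed points `u`, `w` at a row `i` where `u - w` attains its maximum `M > 0`, using
the policy that is optimal for `w` at `i`. A discounted row would give `M ≤ γ M`, impossible; so the
row is a switch `i → j`, whence `(u - w) j = M` too, and `w j < w i` because the switching cost is
positive. So every row where `M` is attained switches to another such row with strictly smaller
`w`, which is impossible on a finite set.
-/

open Matrix

theorem Set.Finite.eq_empty_of_forall_exists_lt {α β : Type*} [LinearOrder β] {s : Set α}
    (hs : s.Finite) (f : α → β) (h : ∀ i ∈ s, ∃ j ∈ s, f j < f i) : s = ∅ := by
  by_contra hne
  obtain ⟨i, hi, hmin⟩ := s.exists_min_image f hs (Set.nonempty_iff_ne_empty.2 hne)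
  obtain ⟨j, hj, hlt⟩ := h i hi
  exact (hmin j hj).not_gt hlt

section Rows

variable {ι : Type*} [Fintype ι] {A : Matrix ι ι ℝ} {i : ι}

theorem Matrix.mulVec_apply_eq_of_row_single {j : ι} (hj : A i j = 1)
    (hzero : ∀ j', j' ≠ j → A i j' = 0) (v : ι → ℝ) : (A *ᵥ v) i = v j := by
  rw [mulVec, dotProduct, Fintype.sum_eq_single j fun j' hj' => by rw [hzero j' hj', zero_mul],
    hj, one_mul]

theorem Matrix.mulVec_apply_eq_zero_of_row_zero (hzero : ∀ j, A i j = 0) (v : ι → ℝ) :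
    (A *ᵥ v) i = 0 := by
  simp [mulVec, dotProduct, hzero]

theorem Matrix.mulVec_apply_le_of_row_stochastic (hnonneg : ∀ j, 0 ≤ A i j)
    (hsum : ∑ j, A i j = 1) {v : ι → ℝ} {M : ℝ} (hv : ∀ j, v j ≤ M) : (A *ᵥ v) i ≤ M :=
  calc (A *ᵥ v) i = ∑ j, A i j * v j := rfl
    _ ≤ ∑ j, A i j * M := Finset.sum_le_sum fun j _ => mul_le_mul_of_nonneg_left (hv j) (hnonneg j)
    _ = M := by rw [← Finset.sum_mul, hsum, one_mul]

end Rows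

section Bellman

variable {ι P : Type*} [Fintype ι] [Finite P] [Nonempty P] {T : (ι → ℝ) → ι → ℝ}

theorem exists_policy_sub_le_mulVec_sub (A : P → Matrix ι ι ℝ) (c : P → ι → ℝ)
    (hT : ∀ v i, T v i = ⨅ p, (A p *ᵥ v) i - c p i) {u w : ι → ℝ} (hu : T u = u) (hw : T w = w)
    (i : ι) : ∃ p, w i = (A p *ᵥ w) i - c p i ∧ u i - w i ≤ (A p *ᵥ (u - w)) i := by
  obtain ⟨p, hp⟩ := exists_eq_ciInf_of_finite (f := fun p => (A p *ᵥ w) i - c p i)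
  have hwi : w i = (A p *ᵥ w) i - c p i := by rw [← congrFun hw i, hT, hp]
  have hui : u i ≤ (A p *ᵥ u) i - c p i := by
    rw [← congrFun hu i, hT]
    exact ciInf_le (Finite.bddBelow_range _) p
  refine ⟨p, hwi, ?_⟩
  rw [mulVec_sub, Pi.sub_apply]
  linarith

variable {D E : P → Matrix ι ι ℝ} {c : P → ι → ℝ} {γ : ℝ}

theorem exists_sub_eq_max_and_lt_of_hybrid
    (hγ0 : 0 ≤ γ) (hγ1 : γ < 1) (hE0 : ∀ p i j, 0 ≤ E p i j)
    (hrow : ∀ p i,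
      (∃ j, D p i j = 1 ∧ (∀ j', j' ≠ j → D p i j' = 0) ∧ ∀ j', E p i j' = 0) ∨
      ((∀ j, D p i j = 0) ∧ ∑ j, E p i j = 1))
    (hcost : ∀ p i, ¬ (∀ j, D p i j = 0) → c p i < 0)
    (hT : ∀ v i, T v i = ⨅ p, ((D p + γ • E p) *ᵥ v) i - c p i)
    {u w : ι → ℝ} (hu : T u = u) (hw : T w = w) {M : ℝ} (hM : 0 < M)
    (hmax : ∀ j, (u - w) j ≤ M) {i : ι} (hi : (u - w) i = M) :
    ∃ j, (u - w) j = M ∧ w j < w i := by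
  obtain ⟨p, hwi, hdi⟩ := exists_policy_sub_le_mulVec_sub _ c hT hu hw i
  simp only [add_mulVec, smul_mulVec, Pi.add_apply, Pi.smul_apply, smul_eq_mul] at hwi hdi
  rcases hrow p i with ⟨j, hDj, hDzero, hEzero⟩ | ⟨hDzero, hEsum⟩
  · simp only [mulVec_apply_eq_of_row_single hDj hDzero, mulVec_apply_eq_zero_of_row_zero hEzero,
      mul_zero, add_zero] at hwi hdi
    have hc : c p i < 0 := hcost p i fun h => one_ne_zero (hDj ▸ h j)
    exact ⟨j, le_antisymm (hmax j) (hi ▸ hdi), by linarith⟩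
  · have hE := mulVec_apply_le_of_row_stochastic (hE0 p i) hEsum hmax
    rw [mulVec_apply_eq_zero_of_row_zero hDzero, zero_add] at hdi
    rw [Pi.sub_apply] at hi
    nlinarith

end Bellman

theorem stmt14_general {n : ℕ} {P : Type*} [Fintype P] [Nonempty P]
    (D E : P → Matrix (Fin n) (Fin n) ℝ)
    (c : P → Fin n → ℝ) (γ Δ0 : ℝ)
    (hγ0 : 0 < γ) (hγ1 : γ < 1) (hΔ0 : 0 < Δ0)
    (hE0 : ∀ p i j, 0 ≤ E p i j)
    (hrow : ∀ p i,
      (∃ j, D p i j = 1 ∧ (∀ j', j' ≠ j → D p i j' = 0) ∧ ∀ j', E p i j' = 0) ∨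
      ((∀ j, D p i j = 0) ∧ ∑ j, E p i j = 1))
    (hcost : ∀ p i, ¬ (∀ j, D p i j = 0) → Δ0 ≤ -(c p i))
    (T : (Fin n → ℝ) → Fin n → ℝ)
    (hT : ∀ v i, T v i = ⨅ p, (((D p + γ • E p) *ᵥ v) i - c p i)) :
    ∀ u w : Fin n → ℝ, T u = u → T w = w → u = w := by
  have hcost' : ∀ p i, ¬ (∀ j, D p i j = 0) → c p i < 0 := fun p i h => by
    linarith [hcost p i h]
  suffices key : ∀ u w : Fin n → ℝ, T u = u → T w = w → u ≤ w from
    fun u w hu hw => le_antisymm (key u w hu hw) (key w u hw hu)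
  intro u w hu hw
  by_contra hle
  obtain ⟨i₀, hi₀⟩ : ∃ i, w i < u i := by simpa only [Pi.le_def, not_forall, not_le] using hle
  have : Nonempty (Fin n) := ⟨i₀⟩
  obtain ⟨imax, hmax⟩ := Finite.exists_max (u - w)
  have hM : 0 < (u - w) imax := (sub_pos.2 hi₀).trans_le (hmax i₀)
  have hempty : {i | (u - w) i = (u - w) imax} = ∅ :=
    (Set.toFinite _).eq_empty_of_forall_exists_lt w fun i hi =>
      exists_sub_eq_max_and_lt_of_hybrid hγ0.le hγ1 hE0 hrow hcost' hT hu hw hM hmax hi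
  exact Set.eq_empty_iff_forall_notMem.1 hempty imax rfl

/-- Uniqueness of the fixed point of the hybrid semi-Lagrangian scheme:
rows corresponding to switches (via the 0-1 partial permutation `D`) carry no
discount, but switching costs are strictly positive and no policy allows `m`
consecutive switches, so the fixed point is unique. -/
theorem stmt14 {n m : ℕ} {P : Type*} [Fintype P] [Nonempty P]
    (D E : P → Matrix (Fin n) (Fin n) ℝ)
    (c : P → Fin n → ℝ) (γ Δ0 : ℝ)
    (hγ0 : 0 < γ) (hγ1 : γ < 1) (hΔ0 : 0 < Δ0)
    (hD0 : ∀ p i j, 0 ≤ D p i j) (hE0 : ∀ p i j, 0 ≤ E p i j)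
    (hrow : ∀ p i,
      (∃ j, D p i j = 1 ∧ (∀ j', j' ≠ j → D p i j' = 0) ∧ ∀ j', E p i j' = 0) ∨
      ((∀ j, D p i j = 0) ∧ ∑ j, E p i j = 1))
    (hcost : ∀ p i, ¬ (∀ j, D p i j = 0) → Δ0 ≤ -(c p i))
    (hchain : ∀ p : P, ∀ i : ℕ → Fin n, ¬ (∀ t < m, D p (i t) (i (t+1)) = 1))
    (T : (Fin n → ℝ) → Fin n → ℝ)
    (hT : ∀ v i, T v i = ⨅ p, (((D p + γ • E p) *ᵥ v) i - c p i)) :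
    ∀ u w : Fin n → ℝ, T u = u → T w = w → u = w :=
  stmt14_general D E c γ Δ0 hγ0 hγ1 hΔ0 hE0 hrow hcost T hT
end
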